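/- Under the two-state stationary Markov chain assumptions, for every integer t ≥ 1: E((1−X_t)(1−X_{t−1})) = (1+α₁)/((1+α₀)(1+α₀+α₁)) and Var((1−X_t)(1−X_{t−1})) = α₀(1+α₁)(α₀+α₁+2)/((1+α₀)²(1+α₀+α₁)²); moreover, for all integers t, s ≥ 1 with t ≠ s, Cov((1−X_t)(1−X_{t−1}), (1−X_s)(1−X_{s−1})) = (α₁/(1+α₀+α₁))^{|t−s|−1} · α₀(1+α₁)²/((1+α₀)²(1+α₀+α₁)²). -/

import Mathlib

/-!
Write `λ = α₁ / (1 + α₀ + α₁)`. On every cylinder of the past, hence on every event `B` of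
`σ(X 0, …, X m)`, the transition law reads
`P({X (m+1) = 0} ∩ B) = P(B) / (1 + α₀ + α₁) + λ P({X m = 0} ∩ B)`.
Iterating, `P({X (n+k) = 0} ∩ B)` relaxes geometrically at rate `λ` to its stationary value
`P(B) / (1 + α₀)`; with `B = Ω` this gives `P(X t = 0) = 1 / (1 + α₀)` for every `t`.
The products `(1 - X t)(1 - X (t-1))` are indicators of two consecutive zeros, so the mean,
variance and covariances reduce to the probability of one such pair and of two such pairs,
which the two displayed facts compute.
-/

open MeasureTheory ProbabilityTheory Real

/-- A two-state stationary Markov chain with parameters `α₀, α₁`. -/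
structure TwoStateChain (Ω : Type) [MeasurableSpace Ω] (μ : Measure Ω)
    (α₀ α₁ : ℝ) (X : ℕ → Ω → ℝ) : Prop where
  isProb : IsProbabilityMeasure μ
  pos₀ : 0 < α₀
  pos₁ : 0 < α₁
  meas : ∀ t, Measurable (X t)
  binary : ∀ t ω, X t ω = 0 ∨ X t ω = 1
  init : (μ {ω | X 0 ω = 1}).toReal = α₀ / (1 + α₀)
  markov_zero : ∀ t : ℕ, 1 ≤ t → ∀ x : ℕ → ℝ,
    (∀ s, s < t → x s = 0 ∨ x s = 1) → x (t - 1) = 0 →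
    0 < μ {ω | ∀ s, s < t → X s ω = x s} →
    (μ ({ω | X t ω = 1} ∩ {ω | ∀ s, s < t → X s ω = x s})).toReal =
      (α₀ / (1 + α₀ + α₁)) * (μ {ω | ∀ s, s < t → X s ω = x s}).toReal
  markov_one : ∀ t : ℕ, 1 ≤ t → ∀ x : ℕ → ℝ,
    (∀ s, s < t → x s = 0 ∨ x s = 1) → x (t - 1) = 1 →
    0 < μ {ω | ∀ s, s < t → X s ω = x s} →
    (μ ({ω | X t ω = 1} ∩ {ω | ∀ s, s < t → X s ω = x s})).toReal =
      ((α₀ + α₁) / (1 + α₀ + α₁)) * (μ {ω | ∀ s, s < t → X s ω = x s}).toReal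

/-- Covariance `Cov(f,g) = E(fg) − E(f)E(g)`. -/
noncomputable def covQ {Ω : Type} [MeasurableSpace Ω] (μ : Measure Ω) (f g : Ω → ℝ) : ℝ :=
  (∫ ω, f ω * g ω ∂μ) - (∫ ω, f ω ∂μ) * ∫ ω, g ω ∂μ

theorem covQ_comm {Ω : Type} [MeasurableSpace Ω] (μ : Measure Ω) (f g : Ω → ℝ) :
    covQ μ f g = covQ μ g f := by
  simp only [covQ, mul_comm (f _), mul_comm (∫ ω, f ω ∂μ)]

theorem covQ_indicator_one {Ω : Type} [MeasurableSpace Ω] (μ : Measure Ω) {A B : Set Ω}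
    (hA : MeasurableSet A) (hB : MeasurableSet B) :
    covQ μ (A.indicator 1) (B.indicator 1) = μ.real (A ∩ B) - μ.real A * μ.real B := by
  rw [covQ, ← integral_indicator_one hA, ← integral_indicator_one hB,
    ← integral_indicator_one (hA.inter hB), Set.inter_indicator_one]
  rfl

section Past

variable {Ω : Type} {X : ℕ → Ω → ℝ}

def pastVec (X : ℕ → Ω → ℝ) (n : ℕ) (ω : Ω) : Fin n → ℝ := fun i => X i ω

/-- `σ(X 0, …, X (n - 1))`. -/
abbrev pastSigma (X : ℕ → Ω → ℝ) (n : ℕ) : MeasurableSpace Ω :=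
  MeasurableSpace.comap (pastVec X n) inferInstance

theorem pastSigma_mono {n N : ℕ} (h : n ≤ N) : pastSigma X n ≤ pastSigma X N := by
  have hcomp : pastVec X n = (fun v (i : Fin n) => v (Fin.castLE h i)) ∘ pastVec X N := rfl
  rw [pastSigma, pastSigma, hcomp, ← MeasurableSpace.comap_comp]
  exact MeasurableSpace.comap_mono (measurable_pi_lambda _ fun i => measurable_pi_apply _).comap_le

theorem measurableSet_pastSigma_eq {n j : ℕ} (hj : j < n) (y : ℝ) :
    MeasurableSet[pastSigma X n] {ω | X j ω = y} :=
  (measurable_pi_apply (⟨j, hj⟩ : Fin n)).comp (comap_measurable (pastVec X n))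
    (measurableSet_singleton y)

theorem one_sub_mul_one_sub_eq_indicator (hbin : ∀ t ω, X t ω = 0 ∨ X t ω = 1) (i j : ℕ) :
    (fun ω => (1 - X i ω) * (1 - X j ω)) = ({ω | X i ω = 0} ∩ {ω | X j ω = 0}).indicator 1 := by
  ext ω
  rcases hbin i ω with hi | hi <;> rcases hbin j ω with hj | hj <;> simp [hi, hj]

variable [MeasurableSpace Ω] {μ : Measure Ω}

theorem measurable_pastVec (hmeas : ∀ t, Measurable (X t)) (n : ℕ) : Measurable (pastVec X n) :=
  measurable_pi_lambda _ fun i => hmeas i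

open Classical in
theorem measureReal_inter_preimage_pastVec_eq_sum [IsFiniteMeasure μ]
    (hmeas : ∀ t, Measurable (X t)) (hbin : ∀ t ω, X t ω = 0 ∨ X t ω = 1) {n : ℕ} {E : Set Ω}
    (hE : MeasurableSet E) (S : Set (Fin n → ℝ)) :
    μ.real (E ∩ pastVec X n ⁻¹' S) =
      ∑ v ∈ (Fintype.piFinset fun _ => {0, 1}).filter (· ∈ S),
        μ.real (E ∩ pastVec X n ⁻¹' {v}) := by
  have hunion : E ∩ pastVec X n ⁻¹' S =
      ⋃ v ∈ (Fintype.piFinset fun _ => {0, 1}).filter (· ∈ S), E ∩ pastVec X n ⁻¹' {v} := by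
    ext ω
    simp [pastVec, Fintype.mem_piFinset, hbin]
  rw [hunion, measureReal_biUnion_finset]
  · intro v _ w _ hvw
    exact ((Set.disjoint_singleton.2 hvw).preimage _).mono Set.inter_subset_right
      Set.inter_subset_right
  · exact fun v _ => hE.inter (measurable_pastVec hmeas n (measurableSet_singleton v))

theorem measureReal_zero_inter_eq_sub [IsFiniteMeasure μ] (hmeas : ∀ t, Measurable (X t))
    (hbin : ∀ t ω, X t ω = 0 ∨ X t ω = 1) (j : ℕ) {B : Set Ω} :
    μ.real ({ω | X j ω = 0} ∩ B) = μ.real B - μ.real ({ω | X j ω = 1} ∩ B) := by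
  have hdiff : B \ {ω | X j ω = 1} = {ω | X j ω = 0} ∩ B := by
    ext ω
    rcases hbin j ω with h | h <;> simp [h, and_comm]
  have h1 : MeasurableSet {ω | X j ω = 1} := hmeas j (measurableSet_singleton 1)
  rw [← measureReal_inter_add_sdiff (s := B) h1, hdiff, Set.inter_comm B]
  ring

end Past

namespace TwoStateChain

variable {Ω : Type} [MeasurableSpace Ω] {μ : Measure Ω} {α₀ α₁ : ℝ} {X : ℕ → Ω → ℝ}
  (hc : TwoStateChain Ω μ α₀ α₁ X)
include hc

theorem measurableSet_setOf_eq (j : ℕ) (y : ℝ) : MeasurableSet {ω | X j ω = y} :=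
  hc.meas j (measurableSet_singleton y)

theorem measureReal_succ_one_inter_atom {m : ℕ} {v : Fin (m + 1) → ℝ}
    (hv : ∀ i, v i = 0 ∨ v i = 1) :
    μ.real ({ω | X (m + 1) ω = 1} ∩ pastVec X (m + 1) ⁻¹' {v}) =
      α₀ / (1 + α₀ + α₁) * μ.real (pastVec X (m + 1) ⁻¹' {v}) +
        α₁ / (1 + α₀ + α₁) * μ.real ({ω | X m ω = 1} ∩ pastVec X (m + 1) ⁻¹' {v}) := by
  have := hc.isProb
  set x : ℕ → ℝ := fun s => if h : s < m + 1 then v ⟨s, h⟩ else 0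
  have hcyl : {ω | ∀ s, s < m + 1 → X s ω = x s} = pastVec X (m + 1) ⁻¹' {v} := by
    ext ω
    simp only [Set.mem_ofPred_eq, Set.mem_preimage, Set.mem_singleton_iff, funext_iff,
      Fin.forall_iff, pastVec, x]
    exact forall₂_congr fun s hs => by rw [dif_pos hs]
  have hx : ∀ s, s < m + 1 → x s = 0 ∨ x s = 1 := fun s hs => by
    simp only [x, dif_pos hs]
    exact hv _
  have hlast : x (m + 1 - 1) = v (Fin.last m) := by simp [x, Fin.last]
  have hXm : ∀ ω ∈ pastVec X (m + 1) ⁻¹' {v}, X m ω = v (Fin.last m) := fun ω hω =>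
    congrFun hω (Fin.last m)
  rcases eq_zero_or_pos (μ (pastVec X (m + 1) ⁻¹' {v})) with hnull | hpos
  · have hnull' : μ.real (pastVec X (m + 1) ⁻¹' {v}) = 0 := by simp [measureReal_def, hnull]
    rw [hnull', measureReal_mono_null Set.inter_subset_right hnull',
      measureReal_mono_null Set.inter_subset_right hnull']
    ring
  rw [← hcyl] at hpos hXm ⊢
  rcases hv (Fin.last m) with h0 | h1
  · have hempty : {ω | X m ω = 1} ∩ {ω | ∀ s, s < m + 1 → X s ω = x s} = ∅ :=
      Set.eq_empty_of_forall_notMem fun ω ⟨hω1, hω⟩ =>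
        zero_ne_one (((hXm ω hω).trans h0).symm.trans hω1)
    rw [hempty, measureReal_empty, mul_zero, add_zero]
    exact hc.markov_zero (m + 1) (Nat.le_add_left 1 m) x hx (hlast.trans h0) hpos
  · have hfull : {ω | X m ω = 1} ∩ {ω | ∀ s, s < m + 1 → X s ω = x s} =
        {ω | ∀ s, s < m + 1 → X s ω = x s} :=
      Set.inter_eq_right.2 fun ω hω => (hXm ω hω).trans h1
    rw [hfull, ← add_mul, ← add_div]
    exact hc.markov_one (m + 1) (Nat.le_add_left 1 m) x hx (hlast.trans h1) hpos

theorem measureReal_succ_one_inter {m : ℕ} {B : Set Ω}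
    (hB : MeasurableSet[pastSigma X (m + 1)] B) :
    μ.real ({ω | X (m + 1) ω = 1} ∩ B) =
      α₀ / (1 + α₀ + α₁) * μ.real B + α₁ / (1 + α₀ + α₁) * μ.real ({ω | X m ω = 1} ∩ B) := by
  classical
  have := hc.isProb
  obtain ⟨S, -, rfl⟩ := hB
  have hsum {E : Set Ω} (hE : MeasurableSet E) :=
    measureReal_inter_preimage_pastVec_eq_sum (μ := μ) hc.meas hc.binary hE S
  have hsum_univ := hsum MeasurableSet.univ
  simp only [Set.univ_inter] at hsum_univ
  rw [hsum (hc.measurableSet_setOf_eq (m + 1) 1), hsum_univ, hsum (hc.measurableSet_setOf_eq m 1),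
    Finset.mul_sum, Finset.mul_sum, ← Finset.sum_add_distrib]
  refine Finset.sum_congr rfl fun v hv => hc.measureReal_succ_one_inter_atom fun i => ?_
  simpa using Fintype.mem_piFinset.1 (Finset.mem_filter.1 hv).1 i

theorem measureReal_succ_zero_inter {m : ℕ} {B : Set Ω}
    (hB : MeasurableSet[pastSigma X (m + 1)] B) :
    μ.real ({ω | X (m + 1) ω = 0} ∩ B) =
      μ.real B / (1 + α₀ + α₁) + α₁ / (1 + α₀ + α₁) * μ.real ({ω | X m ω = 0} ∩ B) := by
  have := hc.isProb
  have hS : 1 + α₀ + α₁ ≠ 0 := by linarith [hc.pos₀, hc.pos₁]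
  rw [measureReal_zero_inter_eq_sub hc.meas hc.binary,
    measureReal_zero_inter_eq_sub hc.meas hc.binary,
    hc.measureReal_succ_one_inter hB]
  field_simp
  ring

theorem measureReal_add_zero_inter {n : ℕ} {B : Set Ω}
    (hB : MeasurableSet[pastSigma X (n + 1)] B) (k : ℕ) :
    μ.real ({ω | X (n + k) ω = 0} ∩ B) =
      μ.real B / (1 + α₀) +
        (α₁ / (1 + α₀ + α₁)) ^ k * (μ.real ({ω | X n ω = 0} ∩ B) - μ.real B / (1 + α₀)) := by
  have h₀ : 1 + α₀ ≠ 0 := by linarith [hc.pos₀]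
  have hS : 1 + α₀ + α₁ ≠ 0 := by linarith [hc.pos₀, hc.pos₁]
  -- `1 / (1 + α₀)` is the fixed point of `p ↦ 1 / (1 + α₀ + α₁) + α₁ / (1 + α₀ + α₁) * p`.
  induction k with
  | zero => simp
  | succ k ih =>
    rw [← add_assoc, hc.measureReal_succ_zero_inter (pastSigma_mono (by omega) B hB), ih, pow_succ]
    field_simp
    ring

theorem measureReal_setOf_eq_zero (t : ℕ) : μ.real {ω | X t ω = 0} = 1 / (1 + α₀) := by
  have := hc.isProb
  have h₀ : 1 + α₀ ≠ 0 := by linarith [hc.pos₀]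
  have hinit : μ.real {ω | X 0 ω = 0} = 1 / (1 + α₀) := by
    have h := measureReal_zero_inter_eq_sub (μ := μ) hc.meas hc.binary 0 (B := Set.univ)
    have h₁ : μ.real {ω | X 0 ω = 1} = α₀ / (1 + α₀) := hc.init
    rw [Set.inter_univ, Set.inter_univ, probReal_univ, h₁] at h
    rw [h]
    field_simp
    ring
  have h := hc.measureReal_add_zero_inter (n := 0) MeasurableSet.univ t
  simpa [hinit] using h

theorem measureReal_succ_zero_inter_zero {m : ℕ} {B : Set Ω}
    (hB : MeasurableSet[pastSigma X (m + 1)] B) :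
    μ.real ({ω | X (m + 1) ω = 0} ∩ ({ω | X m ω = 0} ∩ B)) =
      (1 + α₁) / (1 + α₀ + α₁) * μ.real ({ω | X m ω = 0} ∩ B) := by
  rw [hc.measureReal_succ_zero_inter ((measurableSet_pastSigma_eq m.lt_succ_self 0).inter hB),
    ← Set.inter_assoc, Set.inter_self, add_div, add_mul]
  ring

theorem measureReal_pair (m : ℕ) :
    μ.real ({ω | X (m + 1) ω = 0} ∩ {ω | X m ω = 0}) =
      (1 + α₁) / ((1 + α₀) * (1 + α₀ + α₁)) := by
  have h := hc.measureReal_succ_zero_inter_zero (m := m) MeasurableSet.univ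
  simp only [Set.inter_univ, hc.measureReal_setOf_eq_zero] at h
  rw [h, div_mul_div_comm, mul_one, mul_comm (1 + α₀ + α₁)]

theorem measureReal_pair_inter_pair (m k : ℕ) :
    μ.real (({ω | X (m + k + 2) ω = 0} ∩ {ω | X (m + k + 1) ω = 0}) ∩
        ({ω | X (m + 1) ω = 0} ∩ {ω | X m ω = 0})) =
      (1 + α₁) / (1 + α₀ + α₁) * ((1 + α₁) / ((1 + α₀) * (1 + α₀ + α₁))) *
        (1 / (1 + α₀) + α₀ / (1 + α₀) * (α₁ / (1 + α₀ + α₁)) ^ k) := by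
  have h₀ : 1 + α₀ ≠ 0 := by linarith [hc.pos₀]
  set A := {ω | X (m + 1) ω = 0} ∩ {ω | X m ω = 0}
  have hA : MeasurableSet[pastSigma X (m + 1 + 1)] A :=
    (measurableSet_pastSigma_eq (by omega) 0).inter (measurableSet_pastSigma_eq (by omega) 0)
  have hmid : μ.real ({ω | X (m + 1 + k) ω = 0} ∩ A) =
      μ.real A / (1 + α₀) + (α₁ / (1 + α₀ + α₁)) ^ k * (μ.real A - μ.real A / (1 + α₀)) := by
    have h := hc.measureReal_add_zero_inter hA k
    rwa [Set.inter_eq_right.2 Set.inter_subset_left] at h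
  rw [Set.inter_assoc, show m + k + 2 = m + k + 1 + 1 by ring,
    hc.measureReal_succ_zero_inter_zero (pastSigma_mono (by omega) _ hA),
    show m + k + 1 = m + 1 + k by ring, hmid, hc.measureReal_pair]
  field_simp
  ring

theorem measurableSet_pair (m : ℕ) :
    MeasurableSet ({ω | X (m + 1) ω = 0} ∩ {ω | X m ω = 0}) :=
  (hc.measurableSet_setOf_eq _ 0).inter (hc.measurableSet_setOf_eq _ 0)

theorem covQ_coprod_add (m k : ℕ) :
    covQ μ (fun ω => (1 - X (m + k + 2) ω) * (1 - X (m + k + 1) ω))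
        (fun ω => (1 - X (m + 1) ω) * (1 - X m ω)) =
      (α₁ / (1 + α₀ + α₁)) ^ k * (α₀ * (1 + α₁) ^ 2 / ((1 + α₀) ^ 2 * (1 + α₀ + α₁) ^ 2)) := by
  have h₀ : 1 + α₀ ≠ 0 := by linarith [hc.pos₀]
  have hS : 1 + α₀ + α₁ ≠ 0 := by linarith [hc.pos₀, hc.pos₁]
  rw [one_sub_mul_one_sub_eq_indicator hc.binary, one_sub_mul_one_sub_eq_indicator hc.binary,
    covQ_indicator_one μ (hc.measurableSet_pair (m + k + 1)) (hc.measurableSet_pair m),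
    hc.measureReal_pair_inter_pair, hc.measureReal_pair, hc.measureReal_pair]
  field_simp
  ring

theorem integral_coprod (m : ℕ) :
    ∫ ω, (1 - X (m + 1) ω) * (1 - X m ω) ∂μ = (1 + α₁) / ((1 + α₀) * (1 + α₀ + α₁)) := by
  rw [one_sub_mul_one_sub_eq_indicator hc.binary, integral_indicator_one (hc.measurableSet_pair m),
    hc.measureReal_pair]

theorem covQ_coprod_self (m : ℕ) :
    covQ μ (fun ω => (1 - X (m + 1) ω) * (1 - X m ω)) (fun ω => (1 - X (m + 1) ω) * (1 - X m ω)) =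
      α₀ * (1 + α₁) * (α₀ + α₁ + 2) / ((1 + α₀) ^ 2 * (1 + α₀ + α₁) ^ 2) := by
  have h₀ : 1 + α₀ ≠ 0 := by linarith [hc.pos₀]
  have hS : 1 + α₀ + α₁ ≠ 0 := by linarith [hc.pos₀, hc.pos₁]
  rw [one_sub_mul_one_sub_eq_indicator hc.binary,
    covQ_indicator_one μ (hc.measurableSet_pair m) (hc.measurableSet_pair m), Set.inter_self,
    hc.measureReal_pair]
  field_simp
  ring

end TwoStateChain

/-- Lemma (part ii): mean, variance and autocovariance of `(1−X_t)(1−X_{t−1})` for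
the two-state stationary Markov chain. -/
theorem twoStateChain_coprod_moments (Ω : Type) [MeasurableSpace Ω] (μ : Measure Ω)
    (α₀ α₁ : ℝ) (X : ℕ → Ω → ℝ) (hchain : TwoStateChain Ω μ α₀ α₁ X) :
    (∀ t : ℕ, 1 ≤ t →
      ((∫ ω, (1 - X t ω) * (1 - X (t - 1) ω) ∂μ) =
        (1 + α₁) / ((1 + α₀) * (1 + α₀ + α₁)) ∧
      covQ μ (fun ω => (1 - X t ω) * (1 - X (t - 1) ω))
          (fun ω => (1 - X t ω) * (1 - X (t - 1) ω)) =
        α₀ * (1 + α₁) * (α₀ + α₁ + 2) / ((1 + α₀) ^ 2 * (1 + α₀ + α₁) ^ 2))) ∧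
    ∀ t s : ℕ, 1 ≤ t → 1 ≤ s → t ≠ s →
      covQ μ (fun ω => (1 - X t ω) * (1 - X (t - 1) ω))
          (fun ω => (1 - X s ω) * (1 - X (s - 1) ω)) =
        (α₁ / (1 + α₀ + α₁)) ^ (((t : ℤ) - (s : ℤ)).natAbs - 1) *
          (α₀ * (1 + α₁) ^ 2 / ((1 + α₀) ^ 2 * (1 + α₀ + α₁) ^ 2)) := by
  refine ⟨fun t ht => ?_, fun t s ht hs hne => ?_⟩
  · obtain ⟨m, rfl⟩ := Nat.exists_eq_add_of_le' ht
    rw [Nat.add_sub_cancel]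
    exact ⟨hchain.integral_coprod m, hchain.covQ_coprod_self m⟩
  wlog hst : s < t generalizing t s
  · rw [covQ_comm, this s t hs ht hne.symm (by omega)]
    congr 2
    omega
  obtain ⟨m, rfl⟩ := Nat.exists_eq_add_of_le' hs
  obtain ⟨k, rfl⟩ : ∃ k, t = m + k + 2 := ⟨t - m - 2, by omega⟩
  rw [show ((m + k + 2 : ℕ) - (m + 1 : ℕ) : ℤ).natAbs - 1 = k by omega]
  exact hchain.covQ_coprod_add m k
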